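/- The following two statements are equivalent: (C4) for every digraph D there is a non-zero weight vector w with S_D·w ≤ 𝟎; (C5) for every digraph D there is a real vector v with at least one positive component such that S_D·v ≤ 𝟎. -/

import Mathlib

/-!
C4 ⇒ C5 is immediate. For C5 ⇒ C4 induct on the number of vertices. Deleting a vertex `z` can
only increase distances, hence only increase the entries of `S`; so a C4 weight of `D - z`,
extended by `0` at `z`, is a nonzero `w_z ≥ 0` with `(S_D w_z)_i ≤ 0` for all `i ≠ z`. With `W`
the matrix of columns `w_z`, the matrix `N = S_D W` has nonpositive off-diagonal entries. Either
`N c ≤ 0` for some nonzero `c ≥ 0`, and `W c` is a C4 weight for `D`; or, by the positive-part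
trick, `N x ≤ 0` forces `x ≤ 0`. Then `N`, hence `S_D`, is invertible, and `S_D v ≤ 0` gives
`v = W N⁻¹ S_D v ≤ 0`, which contradicts C5.
-/

open Matrix

/-- A digraph whose underlying graph is simple: a finite vertex set with an
irreflexive arc relation having no pair of opposite arcs. -/
structure SimpleDigraph (V : Type) where
  Adj : V → V → Prop
  loopless : ∀ v, ¬ Adj v v
  no_opposite : ∀ u v, Adj u v → ¬ Adj v u

namespace SimpleDigraph

variable {V : Type}

/-- `D.DistTwo u v` says that `v` is at out-distance exactly `2` from `u`,
i.e. the shortest directed path from `u` to `v` has length `2`. -/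
def DistTwo (D : SimpleDigraph V) (u v : V) : Prop :=
  u ≠ v ∧ ¬ D.Adj u v ∧ ∃ w, D.Adj u w ∧ D.Adj w v

open Classical in
/-- The second-neighborhood matrix of a digraph: the `(i,j)` entry is `1` if
`d(i,j) = 1`, `-1` if `d(i,j) = 2`, and `0` otherwise. -/
noncomputable def sMatrix (D : SimpleDigraph V) : Matrix V V ℝ :=
  Matrix.of fun i j => if D.Adj i j then 1 else if D.DistTwo i j then -1 else 0

/-- `d⁺(v)`, the number of vertices at out-distance `1` from `v`. -/
noncomputable def outDeg (D : SimpleDigraph V) (v : V) : ℕ :=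
  Nat.card {u : V // D.Adj v u}

/-- `d⁺⁺(v)`, the number of vertices at out-distance `2` from `v`. -/
noncomputable def outDeg2 (D : SimpleDigraph V) (v : V) : ℕ :=
  Nat.card {u : V // D.DistTwo v u}

/-- `d⁻(v)`, the number of vertices at in-distance `1` from `v`. -/
noncomputable def inDeg (D : SimpleDigraph V) (v : V) : ℕ :=
  Nat.card {u : V // D.Adj u v}

/-- `d⁻⁻(v)`, the number of vertices at in-distance `2` from `v`. -/
noncomputable def inDeg2 (D : SimpleDigraph V) (v : V) : ℕ :=
  Nat.card {u : V // D.DistTwo u v}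

/-- The number of arcs of a digraph. -/
noncomputable def numArcs (D : SimpleDigraph V) : ℕ :=
  Nat.card {p : V × V // D.Adj p.1 p.2}

end SimpleDigraph


/-- Conjecture C4: for every digraph `D` there is a non-zero weight vector `w`
with `S_D · w ≤ 𝟎`. -/
def ConjC4 : Prop :=
  ∀ (n : ℕ), 0 < n → ∀ D : SimpleDigraph (Fin n),
    ∃ w : Fin n → ℝ, (∀ i, 0 ≤ w i) ∧ w ≠ 0 ∧ D.sMatrix *ᵥ w ≤ 0

/-- Conjecture C5: for every digraph `D` there is a real vector `v` with at least
one positive component such that `S_D · v ≤ 𝟎`. -/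
def ConjC5 : Prop :=
  ∀ (n : ℕ), 0 < n → ∀ D : SimpleDigraph (Fin n),
    ∃ v : Fin n → ℝ, (∃ i, 0 < v i) ∧ D.sMatrix *ᵥ v ≤ 0

namespace Matrix

variable {ι 𝕜 : Type*} [Fintype ι] [Field 𝕜] [LinearOrder 𝕜] [IsStrictOrderedRing 𝕜]

/-- Collatz's monotone matrices, written with `≤ 0` instead of `≥ 0` (equivalent via `x ↦ -x`). -/
def IsMonotone (N : Matrix ι ι 𝕜) : Prop :=
  ∀ x, N *ᵥ x ≤ 0 → x ≤ 0

theorem mulVec_sup_zero_nonpos {N : Matrix ι ι 𝕜} (hN : ∀ i j, i ≠ j → N i j ≤ 0) {x : ι → 𝕜}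
    (hx : N *ᵥ x ≤ 0) : N *ᵥ (x ⊔ 0) ≤ 0 := by
  intro i
  simp only [mulVec, dotProduct, Pi.sup_apply, Pi.zero_apply]
  rcases lt_or_ge 0 (x i) with hxi | hxi
  · calc ∑ j, N i j * (x j ⊔ 0) ≤ ∑ j, N i j * x j := by
          refine Finset.sum_le_sum fun j _ => ?_
          rcases eq_or_ne i j with rfl | hij
          · rw [max_eq_left hxi.le]
          · exact mul_le_mul_of_nonpos_left le_sup_left (hN i j hij)
      _ ≤ 0 := hx i
  · refine Finset.sum_nonpos fun j _ => ?_
    rcases eq_or_ne i j with rfl | hij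
    · simp [max_eq_right hxi]
    · exact mul_nonpos_of_nonpos_of_nonneg (hN i j hij) le_sup_right

theorem exists_nonneg_mulVec_nonpos_or_isMonotone {N : Matrix ι ι 𝕜}
    (hN : ∀ i j, i ≠ j → N i j ≤ 0) : (∃ c, 0 ≤ c ∧ c ≠ 0 ∧ N *ᵥ c ≤ 0) ∨ N.IsMonotone := by
  refine or_iff_not_imp_right.2 fun h => ?_
  obtain ⟨x, hx, hx0⟩ : ∃ x, N *ᵥ x ≤ 0 ∧ ¬x ≤ 0 := by simpa [IsMonotone] using h
  obtain ⟨i, hi⟩ : ∃ i, 0 < x i := by simpa [Pi.le_def] using hx0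
  refine ⟨x ⊔ 0, le_sup_right, fun h => ?_, mulVec_sup_zero_nonpos hN hx⟩
  have := congrFun h i
  simp only [Pi.sup_apply, Pi.zero_apply, sup_eq_right] at this
  exact this.not_gt hi

variable [DecidableEq ι]

theorem IsMonotone.isUnit {N : Matrix ι ι 𝕜} (hN : N.IsMonotone) : IsUnit N := by
  refine mulVec_injective_iff_isUnit.1 fun x y hxy => le_antisymm ?_ ?_
  · simpa using hN (x - y) (by simp [mulVec_sub, hxy])
  · simpa using hN (y - x) (by simp [mulVec_sub, hxy])

theorem IsMonotone.of_mul {S W : Matrix ι ι 𝕜} (hW : ∀ i j, 0 ≤ W i j)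
    (hSW : (S * W).IsMonotone) : S.IsMonotone := by
  intro v hv
  have hunit := hSW.isUnit
  set x := (S * W)⁻¹ *ᵥ (S *ᵥ v)
  have hx : (S * W) *ᵥ x = S *ᵥ v := by
    rw [mulVec_mulVec, mul_nonsing_inv _ ((isUnit_iff_isUnit_det _).1 hunit), one_mulVec]
  have hWx : W *ᵥ x = v :=
    mulVec_injective_iff_isUnit.2 (isUnit_of_mul_isUnit_left hunit) (by rwa [mulVec_mulVec])
  have hx0 : x ≤ 0 := hSW x (hx ▸ hv)
  rw [← hWx]
  exact fun i => Finset.sum_nonpos fun j _ => mul_nonpos_of_nonneg_of_nonpos (hW i j) (hx0 j)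

theorem exists_nonneg_mulVec_nonpos_or_isMonotone_of_columns {S : Matrix ι ι 𝕜}
    {w : ι → ι → 𝕜} (hw0 : ∀ z, 0 ≤ w z) (hw : ∀ z, w z ≠ 0)
    (hS : ∀ z i, i ≠ z → (S *ᵥ w z) i ≤ 0) :
    (∃ u, 0 ≤ u ∧ u ≠ 0 ∧ S *ᵥ u ≤ 0) ∨ S.IsMonotone := by
  set W : Matrix ι ι 𝕜 := of fun i z => w z i
  have hW : ∀ i z, 0 ≤ W i z := fun i z => hw0 z i
  refine (exists_nonneg_mulVec_nonpos_or_isMonotone fun i z hiz => hS z i hiz).imp ?_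
    (.of_mul hW)
  rintro ⟨c, hc0, hc, hSWc⟩
  obtain ⟨z, hz⟩ := Function.ne_iff.1 hc
  obtain ⟨i, hi⟩ := Function.ne_iff.1 (hw z)
  have hWc0 : 0 ≤ W *ᵥ c := fun i => Finset.sum_nonneg fun z _ => mul_nonneg (hW i z) (hc0 z)
  refine ⟨W *ᵥ c, hWc0, fun h => ?_, by rwa [mulVec_mulVec]⟩
  have hpos : 0 < W i z * c z := mul_pos ((hw0 z i).lt_of_ne' hi) ((hc0 z).lt_of_ne' hz)
  have hle : W i z * c z ≤ (W *ᵥ c) i :=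
    Finset.single_le_sum (f := fun z => W i z * c z)
      (fun z _ => mul_nonneg (hW i z) (hc0 z)) (Finset.mem_univ z)
  exact (hpos.trans_le hle).ne' (congrFun h i)

end Matrix

namespace SimpleDigraph

variable {U V : Type}

def comap (D : SimpleDigraph V) (f : U → V) : SimpleDigraph U where
  Adj a b := D.Adj (f a) (f b)
  loopless a := D.loopless (f a)
  no_opposite a b := D.no_opposite (f a) (f b)

theorem DistTwo.of_comap {D : SimpleDigraph V} {f : U → V} (hf : Function.Injective f) {a b : U}
    (h : (D.comap f).DistTwo a b) : D.DistTwo (f a) (f b) := by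
  obtain ⟨hne, hnadj, c, hac, hcb⟩ := h
  exact ⟨hf.ne hne, hnadj, f c, hac, hcb⟩

theorem sMatrix_self (D : SimpleDigraph V) (v : V) : D.sMatrix v v = 0 := by
  simp [sMatrix, D.loopless v, DistTwo]

/-- Distances can only grow in an induced subdigraph, and `S` is antitone in the distance. -/
theorem sMatrix_le_sMatrix_comap (D : SimpleDigraph V) {f : U → V} (hf : Function.Injective f)
    (a b : U) : D.sMatrix (f a) (f b) ≤ (D.comap f).sMatrix a b := by
  simp only [sMatrix, of_apply]
  by_cases hadj : D.Adj (f a) (f b)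
  · rw [if_pos hadj, if_pos (show (D.comap f).Adj a b from hadj)]
  rw [if_neg hadj, if_neg (show ¬(D.comap f).Adj a b from hadj)]
  by_cases hd : (D.comap f).DistTwo a b
  · rw [if_pos hd, if_pos (hd.of_comap hf)]
  rw [if_neg hd]
  split_ifs <;> norm_num

theorem sMatrix_mulVec_insertNth_le {m : ℕ} (D : SimpleDigraph (Fin (m + 1))) (z : Fin (m + 1))
    {w : Fin m → ℝ} (hw : 0 ≤ w) (a : Fin m) :
    (D.sMatrix *ᵥ z.insertNth 0 w) (z.succAbove a) ≤
      ((D.comap z.succAbove).sMatrix *ᵥ w) a := by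
  simp only [mulVec, dotProduct, Fin.sum_univ_succAbove _ z, Fin.insertNth_apply_same,
    Fin.insertNth_apply_succAbove, mul_zero, zero_add]
  exact Finset.sum_le_sum fun b _ =>
    mul_le_mul_of_nonneg_right (D.sMatrix_le_sMatrix_comap Fin.succAbove_right_injective a b)
      (hw b)

theorem exists_weight_of_comap_succAbove {m : ℕ} (D : SimpleDigraph (Fin (m + 1)))
    (z : Fin (m + 1)) {w : Fin m → ℝ} (hw0 : 0 ≤ w) (hw : w ≠ 0)
    (hS : (D.comap z.succAbove).sMatrix *ᵥ w ≤ 0) :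
    ∃ u, 0 ≤ u ∧ u ≠ 0 ∧ ∀ i, i ≠ z → (D.sMatrix *ᵥ u) i ≤ 0 := by
  refine ⟨z.insertNth 0 w, Fin.le_insertNth_iff.2 ⟨le_rfl, hw0⟩, fun h => hw ?_, fun i hi => ?_⟩
  · simpa using congrArg (· ∘ z.succAbove) h
  · obtain ⟨a, rfl⟩ := Fin.exists_succAbove_eq hi
    exact (D.sMatrix_mulVec_insertNth_le z hw0 a).trans (hS a)

end SimpleDigraph

open SimpleDigraph in
theorem ConjC5.conjC4 (h5 : ConjC5) : ConjC4 := by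
  intro n
  induction n using Nat.strong_induction_on with
  | _ n ih =>
  intro hn D
  obtain ⟨m, rfl⟩ := Nat.exists_eq_add_one.2 hn
  rcases m.eq_zero_or_pos with rfl | hm
  · refine ⟨1, fun _ => zero_le_one, one_ne_zero, fun i => ?_⟩
    simp [mulVec, dotProduct, Fin.fin_one_eq_zero i, sMatrix_self]
  have hdel : ∀ z, ∃ u, 0 ≤ u ∧ u ≠ 0 ∧ ∀ i, i ≠ z → (D.sMatrix *ᵥ u) i ≤ 0 := fun z => by
    obtain ⟨w, hw0, hw, hS⟩ := ih m (by omega) hm (D.comap z.succAbove)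
    exact D.exists_weight_of_comap_succAbove z hw0 hw hS
  choose u hu0 hu hS using hdel
  refine (exists_nonneg_mulVec_nonpos_or_isMonotone_of_columns hu0 hu hS).resolve_right
    fun hmono => ?_
  obtain ⟨v, ⟨i, hi⟩, hv⟩ := h5 (m + 1) hn D
  exact (hmono v hv i).not_gt hi

theorem ConjC4.conjC5 (h4 : ConjC4) : ConjC5 := fun n hn D => by
  obtain ⟨w, hw0, hw, hS⟩ := h4 n hn D
  obtain ⟨i, hi⟩ := Function.ne_iff.1 hw
  exact ⟨w, ⟨i, (hw0 i).lt_of_ne' hi⟩, hS⟩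

/-- Conjectures C4 and C5 are equivalent. -/
theorem conjC4_iff_conjC5 : ConjC4 ↔ ConjC5 :=
  ⟨ConjC4.conjC5, ConjC5.conjC4⟩
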